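/- Let l ≥ 1 and let ψ = (ψ_0,…,ψ_{l-1}) be a tuple of polynomials in k[x_1,…,x_r]. Then for every 0 ≤ j ≤ l−1, one has the identity ∑_{a=j}^{l−1} ((−1)^{a+j}/(a−j)!) · (a! · C(2l−1,a)^{−1} · f_{a,r,l,F_ψ}) = π_j^ψ in k[{g_{ij}}_{1≤i<j≤r+1}]. -/

import Mathlib

open MvPolynomial Finset

/-- Index type for the strictly upper-triangular entries `g_{ij}`, `1 ≤ i < j ≤ r+1`. -/
abbrev UTIdx (r : ℕ) := {p : Fin (r + 1) × Fin (r + 1) // p.1 < p.2}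

/-- The coordinate ring `k[{g_{ij}}_{1 ≤ i < j ≤ r+1}]` of the unipotent
upper-triangular group `U_{r+1}`. -/
abbrev URing (k : Type) [CommSemiring k] (r : ℕ) := MvPolynomial (UTIdx r) k

/-- The generic unipotent upper-triangular matrix: indeterminate entries `g_{ij}` for `i < j`,
`1` on the diagonal, `0` below the diagonal. -/
noncomputable def genMat (k : Type) [CommRing k] (r : ℕ) :
    Matrix (Fin (r + 1)) (Fin (r + 1)) (URing k r) :=
  Matrix.of fun i j => if h : i < j then X ⟨(i, j), h⟩ else if i = j then 1 else 0

/-- Action of a matrix on polynomials via `g · xᵢ = ∑ⱼ gⱼᵢ xⱼ`. -/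
noncomputable def glAct {R : Type*} [CommSemiring R] {n : ℕ}
    (g : Matrix (Fin n) (Fin n) R) (p : MvPolynomial (Fin n) R) : MvPolynomial (Fin n) R :=
  aeval (fun i => ∑ j, MvPolynomial.C (g j i) * X j) p

/-- A polynomial in `k[x₁,…,xᵣ]`, viewed in `(URing k r)[x₁,…,x_{r+1}]`. -/
noncomputable def emb (k : Type) [CommRing k] (r : ℕ) (p : MvPolynomial (Fin r) k) :
    MvPolynomial (Fin (r + 1)) (URing k r) :=
  MvPolynomial.map (algebraMap k (URing k r)) (rename Fin.castSucc p)

/-- The first wedge factor `∑_{i=0}^{2l-1} x_{r+1}^i x₁^{2l-i} F_i` of `v_d^r(F)`. -/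
noncomputable def vP (k : Type) [CommRing k] (r l : ℕ) (F : ℕ → MvPolynomial (Fin r) k) :
    MvPolynomial (Fin (r + 1)) (URing k r) :=
  ∑ i ∈ range (2 * l), X (Fin.last r) ^ i * X 0 ^ (2 * l - i) * emb k r (F i)

/-- The second wedge factor `∑_{i=0}^{2l-1} x_{r+1}^{i+1} x₁^{2l-i-1} F_i` of `v_d^r(F)`. -/
noncomputable def vQ (k : Type) [CommRing k] (r l : ℕ) (F : ℕ → MvPolynomial (Fin r) k) :
    MvPolynomial (Fin (r + 1)) (URing k r) :=
  ∑ i ∈ range (2 * l), X (Fin.last r) ^ (i + 1) * X 0 ^ (2 * l - i - 1) * emb k r (F i)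

/-- The monomial `x₁^{2l+d-a} x_{r+1}^{a}`. -/
noncomputable def mUp (r l d a : ℕ) : Fin (r + 1) →₀ ℕ :=
  Finsupp.single 0 (2 * l + d - a) + Finsupp.single (Fin.last r) a

/-- The monomial `x₁^{d+a} x_{r+1}^{2l-a}`. -/
noncomputable def mDown (r l d a : ℕ) : Fin (r + 1) →₀ ℕ :=
  Finsupp.single 0 (d + a) + Finsupp.single (Fin.last r) (2 * l - a)

/-- `θ((g·v_d^r(F))_{x₁^{2l+d-a}x_{r+1}^a ∧ x₁^{d+a}x_{r+1}^{2l-a}})`: the coordinate of the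
transform of `v_d^r(F)` by the generic unipotent upper-triangular matrix at the indicated
basis element of the exterior square, a polynomial in the variables `g_{ij}`. -/
noncomputable def thetaCoord (k : Type) [CommRing k] (r l d : ℕ)
    (F : ℕ → MvPolynomial (Fin r) k) (a : ℕ) : URing k r :=
  coeff (mUp r l d a) (glAct (genMat k r) (vP k r l F)) *
      coeff (mDown r l d a) (glAct (genMat k r) (vQ k r l F)) -
    coeff (mDown r l d a) (glAct (genMat k r) (vP k r l F)) *
      coeff (mUp r l d a) (glAct (genMat k r) (vQ k r l F))

/-- The variable `g_{1,r+1}`. -/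
noncomputable def gTop (k : Type) [CommRing k] (r : ℕ) : URing k r :=
  genMat k r 0 (Fin.last r)

/-- `p̃ = p(1, g_{12}, …, g_{1r})`. -/
noncomputable def tilde (k : Type) [CommRing k] (r : ℕ) (p : MvPolynomial (Fin r) k) :
    URing k r :=
  aeval (fun j : Fin r => genMat k r 0 (Fin.castSucc j)) p

/-- The polynomial `f_{a,r,l,F} ∈ k[{g_{ij}}]`.  (Summands whose exponent of `g_{1,r+1}`
would be negative carry a vanishing binomial coefficient, so truncated subtraction in the
exponent gives the same element.) -/
noncomputable def fA (k : Type) [CommRing k] (r l : ℕ)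
    (F : ℕ → MvPolynomial (Fin r) k) (a : ℕ) : URing k r :=
  (∑ i ∈ range (2 * l), ∑ j ∈ range (2 * l),
      if i < j then
        tilde k r (F i) * tilde k r (F j) * gTop k r ^ (i + j + 1 - 2 * l) *
          ((i.choose a * j.choose (2 * l - a - 1) +
              i.choose (2 * l - a - 1) * j.choose a : ℕ) : URing k r)
      else 0) +
    ∑ i ∈ range (2 * l),
      tilde k r (F i) ^ 2 * gTop k r ^ (2 * i + 1 - 2 * l) *
        ((i.choose a * i.choose (2 * l - a - 1) : ℕ) : URing k r)

/-- The tuple `F_ψ`: `(F_ψ)_i = ψ_i/i!` for `0 ≤ i ≤ l−1`, `(F_ψ)_i = 0` for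
`l ≤ i ≤ 2l−2`, and `(F_ψ)_{2l−1} = 1`. -/
noncomputable def Fpsi (k : Type) [Field k] (r l : ℕ) (ψ : ℕ → MvPolynomial (Fin r) k) :
    ℕ → MvPolynomial (Fin r) k :=
  fun i => if i < l then ((i.factorial : k)⁻¹) • ψ i else if i = 2 * l - 1 then 1 else 0

/-- The polynomial `π_j^ψ ∈ k[{g_{ij}}]`. -/
noncomputable def piPsi (k : Type) [Field k] (r l : ℕ)
    (ψ : ℕ → MvPolynomial (Fin r) k) (j : ℕ) : URing k r :=
  MvPolynomial.C ((((2 * l - 1).factorial : k) / ((2 * l - 1 - j).factorial : k)) *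
      ∑ a ∈ range (l - j), ((2 * l - 1 - j).choose a : k) * (-1 : k) ^ a) *
      gTop k r ^ (2 * l - 1) +
    tilde k r (ψ j) * gTop k r ^ j


/-!
For `F = F_ψ` the only surviving terms of `f_a` (with `a < l`) pair the index `2l-1` with an
index `i < l`, because `C(i, 2l-1-a) = 0` for `i < l`; hence
`f_a = C(2l-1,a) (C(2l-1,a) g^{2l-1} + ∑_{i<l} C(i,a)/i! ψ̃_i g^i)`.
The weight of `f_a` times `C(2l-1,a)` is `(-1)^{a+j} j! C(a,j)`, and
`C(n,a) C(a,j) = C(n,j) C(n-j,a-j)` turns both coefficients into truncated alternating sums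
of binomial coefficients: for `ψ̃_i` this is `∑_b (-1)^b C(i-j,b) = [i = j]`, for `g^{2l-1}` it is
the constant of `π_j^ψ`.
-/

theorem sum_Icc_neg_one_pow_mul_choose_mul_choose {R : Type*} [CommRing R] (j m n : ℕ) :
    ∑ a ∈ Icc j m, (-1 : R) ^ (a + j) * (n.choose a * a.choose j : ℕ) =
      n.choose j * ∑ b ∈ range (m + 1 - j), ((n - j).choose b : R) * (-1) ^ b := by
  rw [← Ico_add_one_right_eq_Icc, sum_Ico_eq_sum_range, mul_sum]
  refine sum_congr rfl fun b _ => ?_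
  rw [Nat.choose_mul (Nat.le_add_right j b), Nat.add_sub_cancel_left,
    show j + b + j = b + 2 * j by omega, pow_add, pow_mul, neg_one_sq, one_pow, mul_one]
  push_cast
  ring

theorem sum_range_neg_one_pow_mul_choose_of_lt {R : Type*} [CommRing R] {m N : ℕ} (h : m < N) :
    ∑ b ∈ range N, (m.choose b : R) * (-1) ^ b = if m = 0 then 1 else 0 := by
  rw [← sum_subset (range_subset_range.mpr h) fun b _ hb =>
    by rw [Nat.choose_eq_zero_of_lt (by simpa using hb), Nat.cast_zero, zero_mul]]
  have h := congrArg (Int.cast : ℤ → R) (Int.alternating_sum_range_choose (n := m))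
  push_cast at h
  rw [← h]
  exact sum_congr rfl fun b _ => mul_comm _ _

theorem Nat.cast_factorial_div_factorial_sub {K : Type*} [Field K] [CharZero K] {n j : ℕ}
    (h : j ≤ n) : (n.factorial : K) / (n - j).factorial = j.factorial * n.choose j := by
  rw [div_eq_iff (Nat.cast_ne_zero.mpr (Nat.factorial_ne_zero _)),
    ← Nat.choose_mul_factorial_mul_factorial h]
  push_cast
  ring

section fA

variable {k : Type} [CommRing k] {r l : ℕ}

theorem fA_eq_of_forall_mem_Ico_eq_zero (F : ℕ → MvPolynomial (Fin r) k)
    (hF : ∀ i ∈ Ico l (2 * l - 1), F i = 0) {a : ℕ} (ha : a < l) :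
    fA k r l F a =
      (((2 * l - 1).choose a ^ 2 : ℕ) : URing k r) * tilde k r (F (2 * l - 1)) ^ 2 *
          gTop k r ^ (2 * l - 1) +
        ∑ i ∈ range l, (((2 * l - 1).choose a * i.choose a : ℕ) : URing k r) *
          tilde k r (F i) * tilde k r (F (2 * l - 1)) * gTop k r ^ i := by
  have hlast : 2 * l - 1 ∈ range (2 * l) := mem_range.mpr (by omega)
  have hchoose : ∀ i < l, i.choose (2 * l - a - 1) = 0 := fun i hi =>
    Nat.choose_eq_zero_of_lt (by omega)
  have htilde : ∀ i, l ≤ i → i ≠ 2 * l - 1 → i < 2 * l → tilde k r (F i) = 0 := fun i h₁ h₂ h₃ =>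
    by rw [hF i (mem_Ico.mpr ⟨h₁, by omega⟩)]; exact map_zero _
  have hsymm : (2 * l - 1).choose (2 * l - a - 1) = (2 * l - 1).choose a := by
    rw [show 2 * l - a - 1 = 2 * l - 1 - a by omega, Nat.choose_symm (by omega)]
  unfold fA
  rw [add_comm]
  congr 1
  · rw [sum_eq_single_of_mem _ hlast fun i hi hne => ?_]
    · rw [show 2 * (2 * l - 1) + 1 - 2 * l = 2 * l - 1 by omega, hsymm]
      push_cast
      ring
    rcases lt_or_ge i l with h | h
    · simp [hchoose i h]
    · simp [htilde i h hne (by simpa using hi)]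
  · have hrow : ∀ i ∈ range (2 * l), (∑ j ∈ range (2 * l),
        if i < j then tilde k r (F i) * tilde k r (F j) * gTop k r ^ (i + j + 1 - 2 * l) *
          ((i.choose a * j.choose (2 * l - a - 1) + i.choose (2 * l - a - 1) * j.choose a : ℕ) :
            URing k r) else 0) =
        if i < 2 * l - 1 then tilde k r (F i) * tilde k r (F (2 * l - 1)) *
          gTop k r ^ (i + (2 * l - 1) + 1 - 2 * l) *
          ((i.choose a * (2 * l - 1).choose (2 * l - a - 1) +
            i.choose (2 * l - a - 1) * (2 * l - 1).choose a : ℕ) : URing k r) else 0 := by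
      intro i _
      refine sum_eq_single_of_mem _ hlast fun j hj hne => ?_
      rcases lt_or_ge j l with h | h
      · split_ifs with hij
        · simp [hchoose j h, hchoose i (hij.trans h)]
        · rfl
      · simp [htilde j h hne (by simpa using hj)]
    rw [sum_congr rfl hrow, ← sum_subset (range_subset_range.mpr (by omega : l ≤ 2 * l))]
    · refine sum_congr rfl fun i hi => ?_
      rw [mem_range] at hi
      rw [if_pos (by omega), show i + (2 * l - 1) + 1 - 2 * l = i by omega, hchoose i hi, hsymm]
      push_cast
      ring
    · intro i hi hni
      rw [mem_range] at hi hni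
      split_ifs with h
      · simp [htilde i (by omega) h.ne hi]
      · rfl

end fA

section Scalar

variable {K : Type*} [Field K] [CharZero K] {l j : ℕ}

theorem sum_Icc_neg_one_pow_mul_factorial_mul_choose_mul_choose_last (hj : j < l) :
    ∑ a ∈ Icc j (l - 1),
        (-1 : K) ^ (a + j) * (j.factorial * a.choose j) * (2 * l - 1).choose a =
      (2 * l - 1).factorial / (2 * l - 1 - j).factorial *
        ∑ b ∈ range (l - j), ((2 * l - 1 - j).choose b : K) * (-1) ^ b := by
  have h := sum_Icc_neg_one_pow_mul_choose_mul_choose (R := K) j (l - 1) (2 * l - 1)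
  rw [show l - 1 + 1 - j = l - j by omega] at h
  rw [Nat.cast_factorial_div_factorial_sub (by omega), mul_assoc, ← h, mul_sum]
  refine sum_congr rfl fun a _ => ?_
  push_cast
  ring

theorem sum_Icc_neg_one_pow_mul_factorial_mul_choose_mul_choose_div {i : ℕ} (hi : i < l) :
    ∑ a ∈ Icc j (l - 1),
        (-1 : K) ^ (a + j) * (j.factorial * a.choose j) * (i.choose a / i.factorial) =
      if i = j then 1 else 0 := by
  have h := sum_Icc_neg_one_pow_mul_choose_mul_choose (R := K) j (l - 1) i
  have hsum : ∑ a ∈ Icc j (l - 1),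
      (-1 : K) ^ (a + j) * (j.factorial * a.choose j) * (i.choose a / i.factorial) =
        j.factorial / i.factorial * (i.choose j *
          ∑ b ∈ range (l - 1 + 1 - j), ((i - j).choose b : K) * (-1) ^ b) := by
    rw [← h, mul_sum]
    refine sum_congr rfl fun a _ => ?_
    push_cast
    ring
  rw [hsum]
  rcases lt_or_ge i j with hij | hji
  · rw [Nat.choose_eq_zero_of_lt hij, if_neg hij.ne]
    simp
  · rw [sum_range_neg_one_pow_mul_choose_of_lt (by omega)]
    rcases eq_or_ne i j with rfl | hne
    · simp [Nat.factorial_ne_zero]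
    · rw [if_neg (by omega), if_neg hne, mul_zero, mul_zero]

end Scalar

section Fpsi

variable {k : Type} [Field k] {r l : ℕ} (ψ : ℕ → MvPolynomial (Fin r) k)

theorem tilde_smul (c : k) (p : MvPolynomial (Fin r) k) :
    tilde k r (c • p) = MvPolynomial.C c * tilde k r p := by
  rw [tilde, map_smul, Algebra.smul_def]
  rfl

theorem fA_Fpsi {a : ℕ} (ha : a < l) :
    fA k r l (Fpsi k r l ψ) a =
      MvPolynomial.C ((2 * l - 1).choose a : k) *
        (MvPolynomial.C ((2 * l - 1).choose a : k) * gTop k r ^ (2 * l - 1) +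
          ∑ i ∈ range l, MvPolynomial.C ((i.choose a : k) / i.factorial) *
            (tilde k r (ψ i) * gTop k r ^ i)) := by
  have hlast : Fpsi k r l ψ (2 * l - 1) = 1 := by
    rw [Fpsi, if_neg (by omega), if_pos rfl]
  rw [fA_eq_of_forall_mem_Ico_eq_zero _ (fun i hi => by
    rw [mem_Ico] at hi; rw [Fpsi, if_neg (by omega), if_neg hi.2.ne]) ha, hlast, mul_add, mul_sum]
  congr 1
  · rw [show tilde k r 1 = 1 from map_one _]
    simp only [Nat.cast_pow, ← map_natCast MvPolynomial.C, map_pow]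
    ring
  · refine sum_congr rfl fun i hi => ?_
    rw [Fpsi, if_pos (mem_range.mp hi), tilde_smul, show tilde k r 1 = 1 from map_one _,
      div_eq_mul_inv]
    simp only [Nat.cast_mul, ← map_natCast MvPolynomial.C, map_mul]
    ring

theorem C_mul_fA_Fpsi [CharZero k] {j a : ℕ} (hja : j ≤ a) (hal : a < l) :
    MvPolynomial.C ((-1 : k) ^ (a + j) * (((a - j).factorial : k))⁻¹ *
        (a.factorial : k) * (((2 * l - 1).choose a : k))⁻¹) * fA k r l (Fpsi k r l ψ) a =
      MvPolynomial.C ((-1 : k) ^ (a + j) * (j.factorial * a.choose j) *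
          (2 * l - 1).choose a) * gTop k r ^ (2 * l - 1) +
        ∑ i ∈ range l, MvPolynomial.C ((-1 : k) ^ (a + j) * (j.factorial * a.choose j) *
          ((i.choose a : k) / i.factorial)) * (tilde k r (ψ i) * gTop k r ^ i) := by
  have hchoose : ((2 * l - 1).choose a : k) ≠ 0 :=
    Nat.cast_ne_zero.mpr (Nat.choose_pos (by omega)).ne'
  have hweight : (-1 : k) ^ (a + j) * (((a - j).factorial : k))⁻¹ * (a.factorial : k) *
      (((2 * l - 1).choose a : k))⁻¹ * (2 * l - 1).choose a =
        (-1 : k) ^ (a + j) * (j.factorial * a.choose j) := by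
    rw [← Nat.cast_factorial_div_factorial_sub hja]
    field_simp
  rw [fA_Fpsi ψ hal, ← mul_assoc, ← map_mul, hweight, mul_add, mul_sum]
  simp only [← mul_assoc, ← map_mul]

end Fpsi

/-- **Lemma 3.4, proof identity.** For `0 ≤ j ≤ l−1`:
`∑_{a=j}^{l−1} ((−1)^{a+j}/(a−j)!)·(a!·C(2l−1,a)⁻¹·f_{a,r,l,F_ψ}) = π_j^ψ`. -/
theorem stmt5 {k : Type} [Field k] [CharZero k] (r l : ℕ) (hl : 1 ≤ l)
    (ψ : ℕ → MvPolynomial (Fin r) k) (j : ℕ) (hj : j ≤ l - 1) :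
    ∑ a ∈ Finset.Icc j (l - 1),
        MvPolynomial.C ((-1 : k) ^ (a + j) * (((a - j).factorial : k))⁻¹ *
            (a.factorial : k) * (((2 * l - 1).choose a : k))⁻¹) *
          fA k r l (Fpsi k r l ψ) a
      = piPsi k r l ψ j := by
  have hpsi : ∀ i ∈ range l, ∑ a ∈ Icc j (l - 1),
      MvPolynomial.C ((-1 : k) ^ (a + j) * (j.factorial * a.choose j) *
        ((i.choose a : k) / i.factorial)) * (tilde k r (ψ i) * gTop k r ^ i) =
        if i = j then tilde k r (ψ i) * gTop k r ^ i else 0 := fun i hi => by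
    rw [← sum_mul, ← map_sum,
      sum_Icc_neg_one_pow_mul_factorial_mul_choose_mul_choose_div (mem_range.mp hi)]
    split_ifs <;> simp
  rw [sum_congr rfl fun a ha => C_mul_fA_Fpsi ψ (mem_Icc.mp ha).1
      (by have := (mem_Icc.mp ha).2; omega), sum_add_distrib, ← sum_mul, ← map_sum,
    sum_Icc_neg_one_pow_mul_factorial_mul_choose_mul_choose_last (by omega), sum_comm,
    sum_congr rfl hpsi, sum_ite_eq', if_pos (mem_range.mpr (by omega)), piPsi]
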